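/- arXiv:1707.03733 — 7 statements merged into one kernel-verified Lean document; each statement's English description precedes it below -/
import Mathlib

section
/- For p ∈ S^d_0 and η ∈ ℝ, the support function of the set K = {(a, g) ∈ S^d × ℝ : ‖a^D‖ + g − σ_c ≤ 0, g ≤ 0}, with pairing (a,g) ⋄ (p,η) = a : p + g·η, equals σ_c‖p‖ if ‖p‖ ≤ η, and +∞ otherwise. -/
open Matrix

/-- Frobenius norm of a real square matrix. -/
noncomputable def frobNorm {d : ℕ} (a : Matrix (Fin d) (Fin d) ℝ) : ℝ :=
  Real.sqrt ((aᵀ * a).trace)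

/-- Deviatoric part of a square matrix. -/
noncomputable def deviator {d : ℕ} (a : Matrix (Fin d) (Fin d) ℝ) :
    Matrix (Fin d) (Fin d) ℝ :=
  a - (a.trace / d) • (1 : Matrix (Fin d) (Fin d) ℝ)

open Set

/-!
Only the deviatoric part of `a` pairs with the trace-free `p`, so by Cauchy–Schwarz a point
`(a, g)` of `K` gives at most `(σ_c - g)‖p‖ + g η = σ_c‖p‖ + g (η - ‖p‖)`, and `a = c • p` with
`c = (σ_c - g) / ‖p‖` attains this bound for every `g ≤ 0`. The support function is therefore the
supremum over `g ≤ 0` of an affine function of `g` with slope `η - ‖p‖`.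
-/

/-- The entries of a square matrix as a Euclidean vector, which turns `(aᵀ * b).trace` into an
inner product and `frobNorm` into its norm. -/
def euclideanEntries {n : Type*} [Fintype n] (a : Matrix n n ℝ) : EuclideanSpace ℝ (n × n) :=
  WithLp.toLp 2 fun ij => a ij.1 ij.2

theorem euclideanEntries_smul {n : Type*} [Fintype n] (c : ℝ) (a : Matrix n n ℝ) :
    euclideanEntries (c • a) = c • euclideanEntries a :=
  rfl

theorem trace_transpose_mul_eq_inner {n : Type*} [Fintype n] (a b : Matrix n n ℝ) :
    (aᵀ * b).trace = inner ℝ (euclideanEntries a) (euclideanEntries b) := by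
  rw [EuclideanSpace.inner_eq_star_dotProduct]
  simp only [euclideanEntries, Matrix.trace, Matrix.diag, Matrix.mul_apply, transpose_apply,
    dotProduct, Fintype.sum_prod_type, star_trivial, mul_comm]
  exact Finset.sum_comm

section FrobeniusNorm

variable {d : ℕ}

theorem frobNorm_eq_norm_euclideanEntries (a : Matrix (Fin d) (Fin d) ℝ) :
    frobNorm a = ‖euclideanEntries a‖ := by
  rw [frobNorm, trace_transpose_mul_eq_inner, real_inner_self_eq_norm_sq,
    Real.sqrt_sq (norm_nonneg _)]

theorem frobNorm_nonneg (a : Matrix (Fin d) (Fin d) ℝ) : 0 ≤ frobNorm a :=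
  Real.sqrt_nonneg _

theorem frobNorm_smul (c : ℝ) (a : Matrix (Fin d) (Fin d) ℝ) :
    frobNorm (c • a) = |c| * frobNorm a := by
  rw [frobNorm_eq_norm_euclideanEntries, frobNorm_eq_norm_euclideanEntries,
    euclideanEntries_smul, norm_smul, Real.norm_eq_abs]

theorem trace_transpose_mul_self (a : Matrix (Fin d) (Fin d) ℝ) :
    (aᵀ * a).trace = frobNorm a ^ 2 := by
  rw [trace_transpose_mul_eq_inner, real_inner_self_eq_norm_sq,
    frobNorm_eq_norm_euclideanEntries]

theorem trace_transpose_mul_le_frobNorm_mul (a b : Matrix (Fin d) (Fin d) ℝ) :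
    (aᵀ * b).trace ≤ frobNorm a * frobNorm b := by
  rw [trace_transpose_mul_eq_inner, frobNorm_eq_norm_euclideanEntries,
    frobNorm_eq_norm_euclideanEntries]
  exact real_inner_le_norm _ _

theorem deviator_of_trace_eq_zero {a : Matrix (Fin d) (Fin d) ℝ} (h : a.trace = 0) :
    deviator a = a := by
  simp [deviator, h]

theorem trace_transpose_deviator_mul (a : Matrix (Fin d) (Fin d) ℝ)
    {p : Matrix (Fin d) (Fin d) ℝ} (hp : p.trace = 0) :
    ((deviator a)ᵀ * p).trace = (aᵀ * p).trace := by
  simp [deviator, transpose_sub, sub_mul, trace_sub, hp]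

end FrobeniusNorm

theorem iSup_Iic_zero_add_mul (A B : ℝ) :
    (⨆ g ∈ Iic (0 : ℝ), ((A + g * B : ℝ) : EReal)) = if 0 ≤ B then (A : EReal) else ⊤ := by
  split_ifs with hB
  · refine le_antisymm (iSup₂_le fun g hg => ?_)
      (le_iSup₂_of_le 0 (mem_Iic.mpr le_rfl) (by simp))
    exact EReal.coe_le_coe (by nlinarith [mem_Iic.mp hg])
  · refine EReal.eq_top_iff_forall_lt _ |>.mpr fun y => ?_
    have hB : B < 0 := not_le.mp hB
    set g := (|y - A| + 1) / B
    have hg : g ≤ 0 := div_nonpos_of_nonneg_of_nonpos (by positivity) hB.le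
    have hgB : g * B = |y - A| + 1 := div_mul_cancel₀ _ hB.ne
    refine lt_of_lt_of_le ?_ (le_iSup₂_of_le g hg le_rfl)
    exact EReal.coe_lt_coe_iff.mpr (by linarith [le_abs_self (y - A)])

section VonMises

variable {d : ℕ} {σc : ℝ} {p : Matrix (Fin d) (Fin d) ℝ}

/-- The set `K` of admissible pairs `(a, g)`. -/
def vonMisesDomain (d : ℕ) (σc : ℝ) : Set (Matrix (Fin d) (Fin d) ℝ × ℝ) :=
  {ag | ag.1.IsSymm ∧ frobNorm (deviator ag.1) + ag.2 - σc ≤ 0 ∧ ag.2 ≤ 0}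

theorem pairing_le_of_mem_vonMisesDomain (hptr : p.trace = 0) (η : ℝ)
    {ag : Matrix (Fin d) (Fin d) ℝ × ℝ} (hag : ag ∈ vonMisesDomain d σc) :
    (ag.1ᵀ * p).trace + ag.2 * η ≤ σc * frobNorm p + ag.2 * (η - frobNorm p) := by
  obtain ⟨-, hyield, -⟩ := hag
  have hdev : frobNorm (deviator ag.1) * frobNorm p ≤ (σc - ag.2) * frobNorm p :=
    mul_le_mul_of_nonneg_right (by linarith) (frobNorm_nonneg p)
  have hcs := trace_transpose_mul_le_frobNorm_mul (deviator ag.1) p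
  rw [trace_transpose_deviator_mul _ hptr] at hcs
  linarith

theorem exists_mem_vonMisesDomain_pairing_eq (hσc : 0 ≤ σc) (hp : p.IsSymm)
    (hptr : p.trace = 0) (η : ℝ) {g : ℝ} (hg : g ≤ 0) :
    ∃ a, (a, g) ∈ vonMisesDomain d σc ∧
      (aᵀ * p).trace + g * η = σc * frobNorm p + g * (η - frobNorm p) := by
  set N := frobNorm p
  set c := (σc - g) / N
  have hc : 0 ≤ c := div_nonneg (by linarith) (frobNorm_nonneg p)
  have hdev : frobNorm (deviator (c • p)) = c * N := by
    rw [deviator_of_trace_eq_zero (by simp [hptr]), frobNorm_smul, abs_of_nonneg hc]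
  -- for `p = 0`, `c` is the junk value `x / 0 = 0`, and `a = 0` still works
  have hcN : c * N ≤ σc - g ∧ c * N * N = (σc - g) * N := by
    rcases eq_or_ne N 0 with hN | hN
    · simp only [hN, mul_zero, and_true]
      linarith
    · rw [div_mul_cancel₀ _ hN]
      exact ⟨le_rfl, rfl⟩
  refine ⟨c • p, ⟨by simp [IsSymm, hp.eq], by linarith [hcN.1], hg⟩, ?_⟩
  rw [transpose_smul, smul_mul, trace_smul, smul_eq_mul, trace_transpose_mul_self]
  linear_combination hcN.2

theorem iSup_vonMisesDomain_pairing (hσc : 0 ≤ σc) (hp : p.IsSymm) (hptr : p.trace = 0)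
    (η : ℝ) :
    (⨆ ag ∈ vonMisesDomain d σc, (((ag.1ᵀ * p).trace + ag.2 * η : ℝ) : EReal)) =
      ⨆ g ∈ Iic (0 : ℝ), ((σc * frobNorm p + g * (η - frobNorm p) : ℝ) : EReal) := by
  refine le_antisymm (iSup₂_le fun ag hag => ?_) (iSup₂_le fun g hg => ?_)
  · exact le_iSup₂_of_le ag.2 hag.2.2
      (EReal.coe_le_coe (pairing_le_of_mem_vonMisesDomain hptr η hag))
  · obtain ⟨a, ha, hval⟩ := exists_mem_vonMisesDomain_pairing_eq hσc hp hptr η hg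
    exact le_iSup₂_of_le (a, g) ha (EReal.coe_le_coe hval.ge)

end VonMises

theorem vonMises_dissipation_isotropic_general {d : ℕ} (σc : ℝ) (hσc : 0 < σc)
    (p : Matrix (Fin d) (Fin d) ℝ) (hp : p.IsSymm) (hptr : p.trace = 0) (η : ℝ) :
    (⨆ ag ∈ {ag : Matrix (Fin d) (Fin d) ℝ × ℝ |
        ag.1.IsSymm ∧ frobNorm (deviator ag.1) + ag.2 - σc ≤ 0 ∧ ag.2 ≤ 0},
        (((ag.1ᵀ * p).trace + ag.2 * η : ℝ) : EReal))
      = if frobNorm p ≤ η then ((σc * frobNorm p : ℝ) : EReal) else (⊤ : EReal) := by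
  change (⨆ ag ∈ vonMisesDomain d σc, _) = _
  rw [iSup_vonMisesDomain_pairing hσc.le hp hptr, iSup_Iic_zero_add_mul]
  simp only [sub_nonneg]

/-- The support function of
`K = {(a,g) ∈ S^d × ℝ : ‖a^D‖ + g − σ_c ≤ 0, g ≤ 0}` with the pairing
`(a,g) ⋄ (p,η) = a : p + g·η` equals `σ_c‖p‖` if `‖p‖ ≤ η` and `+∞` otherwise. -/
theorem vonMises_dissipation_isotropic {d : ℕ} (hd : 0 < d) (σc : ℝ) (hσc : 0 < σc)
    (p : Matrix (Fin d) (Fin d) ℝ) (hp : p.IsSymm) (hptr : p.trace = 0) (η : ℝ) :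
    (⨆ ag ∈ {ag : Matrix (Fin d) (Fin d) ℝ × ℝ |
        ag.1.IsSymm ∧ frobNorm (deviator ag.1) + ag.2 - σc ≤ 0 ∧ ag.2 ≤ 0},
        (((ag.1ᵀ * p).trace + ag.2 * η : ℝ) : EReal))
      = if frobNorm p ≤ η then ((σc * frobNorm p : ℝ) : EReal) else (⊤ : EReal) :=
  vonMises_dissipation_isotropic_general σc hσc p hp hptr η
end

section
/- Let d = 3 and σ_0 > 0. The support function of the Tresca elastic region K = {σ ∈ S^3 : max_{i,j} |σ_i − σ_j| ≤ σ_0} (where σ_1, σ_2, σ_3 are the eigenvalues of σ), evaluated at a trace-free symmetric matrix p ∈ S^3_0 with eigenvalues p_1, p_2, p_3, equals σ_0 · max{|p_1|, |p_2|, |p_3|}, i.e., σ_0 times the spectral radius of p. -/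
/-!
Diagonalize `p = U diag(d) Uᵀ`. Then `tr(σ p) = ∑ dᵢ cᵢ`, where `c` is the diagonal of `Uᵀ σ U`;
these entries lie in any interval `[a, a + σ₀]` containing the spectrum of `σ`. Since `∑ dᵢ = 0`
we may replace `cᵢ` by `cᵢ - a ∈ [0, σ₀]`, giving `tr(σ p) ≤ σ₀ ∑ dᵢ⁺`, with equality for
`σ = U diag(σ₀ 1_{dᵢ ≥ 0}) Uᵀ`. In dimension three, `∑ dᵢ = 0` forces `∑ dᵢ⁺ = maxᵢ |dᵢ|`.
-/

open Matrix

lemma forall_abs_sub_le_iff_exists_Icc {ι : Type*} [Finite ι] {e : ι → ℝ} {w : ℝ} :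
    (∀ i j, |e i - e j| ≤ w) ↔ ∃ a, ∀ i, e i ∈ Set.Icc a (a + w) := by
  constructor
  · intro h
    rcases isEmpty_or_nonempty ι with hι | hι
    · exact ⟨0, isEmptyElim⟩
    obtain ⟨j, hj⟩ := Finite.exists_min e
    exact ⟨e j, fun i => ⟨hj i, by linarith [(abs_le.mp (h i j)).2]⟩⟩
  · rintro ⟨a, ha⟩ i j
    obtain ⟨hi₁, hi₂⟩ := ha i
    obtain ⟨hj₁, hj₂⟩ := ha j
    exact abs_sub_le_iff.mpr ⟨by linarith, by linarith⟩

lemma sum_mul_le_mul_sum_posPart {ι : Type*} [Fintype ι] {d c : ι → ℝ} {a w : ℝ}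
    (hd : ∑ i, d i = 0) (hc : ∀ i, c i ∈ Set.Icc a (a + w)) :
    ∑ i, d i * c i ≤ w * ∑ i, (d i)⁺ := by
  have hshift : ∑ i, d i * c i = ∑ i, d i * (c i - a) := by
    simp only [mul_sub, Finset.sum_sub_distrib, ← Finset.sum_mul, hd, zero_mul, sub_zero]
  rw [hshift, Finset.mul_sum]
  refine Finset.sum_le_sum fun i _ => ?_
  obtain ⟨hc₁, hc₂⟩ := hc i
  rcases le_total 0 (d i) with h | h
  · rw [posPart_eq_self.mpr h, mul_comm w]
    exact mul_le_mul_of_nonneg_left (by linarith) h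
  · rw [posPart_eq_zero.mpr h, mul_zero]
    exact mul_nonpos_of_nonpos_of_nonneg h (by linarith)

lemma abs_le_sum_posPart_of_sum_eq_zero {ι : Type*} [Fintype ι] {d : ι → ℝ}
    (hd : ∑ i, d i = 0) (i : ι) : |d i| ≤ ∑ j, (d j)⁺ := by
  have hneg : ∑ j, (d j)⁻ = ∑ j, (d j)⁺ := by
    have := Finset.sum_sub_distrib (s := Finset.univ) (fun j => (d j)⁺) (fun j => (d j)⁻)
    simp only [posPart_sub_negPart, hd] at this
    linarith
  rcases le_total 0 (d i) with h | h
  · rw [abs_of_nonneg h, ← posPart_eq_self.mpr h]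
    exact Finset.single_le_sum (fun j _ => posPart_nonneg (d j)) (Finset.mem_univ i)
  · rw [abs_of_nonpos h, ← negPart_eq_neg.mpr h, ← hneg]
    exact Finset.single_le_sum (fun j _ => negPart_nonneg (d j)) (Finset.mem_univ i)

lemma sum_posPart_eq_iSup_abs_of_fin_three {d : Fin 3 → ℝ} (hd : ∑ i, d i = 0) :
    ∑ i, (d i)⁺ = ⨆ i, |d i| := by
  refine le_antisymm ?_ (ciSup_le (abs_le_sum_posPart_of_sum_eq_zero hd))
  have hle : ∀ i, |d i| ≤ ⨆ i, |d i| := le_ciSup (Set.finite_range _).bddAbove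
  have := hle 0; have := hle 1; have := hle 2
  rw [Fin.sum_univ_three] at hd ⊢
  -- two of the three entries share a sign, so `∑ d⁺` or `∑ d⁻ = ∑ d⁺` is carried by one entry
  rcases le_total 0 (d 0) with h0 | h0 <;> rcases le_total 0 (d 1) with h1 | h1 <;>
    rcases le_total 0 (d 2) with h2 | h2 <;>
    simp only [posPart_eq_self.mpr, posPart_eq_zero.mpr, abs_of_nonneg, abs_of_nonpos, *] at * <;>
    linarith

namespace Matrix
variable {n : Type*} [Fintype n] [DecidableEq n]

open scoped MatrixOrder in
lemma IsHermitian.diag_star_mul_mul_mem_Icc {A : Matrix n n ℝ} (hA : A.IsHermitian) {a b : ℝ}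
    (hab : spectrum ℝ A ⊆ Set.Icc a b) (U : unitaryGroup n ℝ) (i : n) :
    (star (U : Matrix n n ℝ) * A * U) i i ∈ Set.Icc a b := by
  have conj_mono : ∀ {B C : Matrix n n ℝ}, B ≤ C →
      (star (U : Matrix n n ℝ) * B * U) i i ≤ (star (U : Matrix n n ℝ) * C * U) i i :=
    fun h => sub_nonneg.mp (Matrix.le_iff.mp (star_left_conjugate_le_conjugate h _)).diag_nonneg
  have conj_scalar (c : ℝ) :
      (star (U : Matrix n n ℝ) * algebraMap ℝ (Matrix n n ℝ) c * U) i i = c := by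
    rw [mul_assoc, Algebra.commutes, ← mul_assoc, Unitary.coe_star_mul_self, one_mul,
      algebraMap_matrix_apply, if_pos rfl, Algebra.algebraMap_self, RingHom.id_apply]
  exact ⟨conj_scalar a ▸ conj_mono (algebraMap_le_of_le_spectrum (fun x hx => (hab hx).1) hA),
    conj_scalar b ▸ conj_mono (le_algebraMap_of_spectrum_le (fun x hx => (hab hx).2) hA)⟩

lemma IsHermitian.trace_mul_eq_sum_eigenvalues_mul_diag {p : Matrix n n ℝ} (hp : p.IsHermitian)
    (σ : Matrix n n ℝ) :
    (σ * p).trace = ∑ i, hp.eigenvalues i *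
      (star (hp.eigenvectorUnitary : Matrix n n ℝ) * σ * hp.eigenvectorUnitary) i i := by
  conv_lhs => rw [hp.spectral_theorem, Unitary.conjStarAlgAut_apply, ← mul_assoc, trace_mul_cycle,
    ← mul_assoc]
  simp only [trace, diag_apply, mul_diagonal, Function.comp_apply, RCLike.ofReal_real_eq_id, id,
    mul_comm]

lemma IsHermitian.sum_eigenvalues_eq_zero {p : Matrix n n ℝ} (hp : p.IsHermitian)
    (hptr : p.trace = 0) : ∑ i, hp.eigenvalues i = 0 := by
  simpa using hp.trace_eq_sum_eigenvalues.symm.trans hptr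

lemma IsHermitian.trace_mul_le_mul_sum_posPart {σ p : Matrix n n ℝ} (hσ : σ.IsHermitian) {w : ℝ}
    (hw : ∀ i j, |hσ.eigenvalues i - hσ.eigenvalues j| ≤ w) (hp : p.IsHermitian)
    (hptr : p.trace = 0) :
    (σ * p).trace ≤ w * ∑ i, (hp.eigenvalues i)⁺ := by
  obtain ⟨a, ha⟩ := forall_abs_sub_le_iff_exists_Icc.mp hw
  have hspec : spectrum ℝ σ ⊆ Set.Icc a (a + w) := by
    rw [hσ.spectrum_real_eq_range_eigenvalues]
    rintro _ ⟨i, rfl⟩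
    exact ha i
  rw [hp.trace_mul_eq_sum_eigenvalues_mul_diag]
  exact sum_mul_le_mul_sum_posPart (hp.sum_eigenvalues_eq_zero hptr)
    (hσ.diag_star_mul_mul_mem_Icc hspec _)

lemma IsHermitian.exists_trace_mul_eq_mul_sum_posPart {w : ℝ} (hw : 0 ≤ w) {p : Matrix n n ℝ}
    (hp : p.IsHermitian) :
    ∃ σ : Matrix n n ℝ, ∃ hσ : σ.IsHermitian,
      (∀ i j, |hσ.eigenvalues i - hσ.eigenvalues j| ≤ w) ∧
        (σ * p).trace = w * ∑ i, (hp.eigenvalues i)⁺ := by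
  set U : Matrix n n ℝ := (hp.eigenvectorUnitary : Matrix n n ℝ)
  let s : n → ℝ := fun i => if 0 ≤ hp.eigenvalues i then w else 0
  have hσ : (U * diagonal s * star U).IsHermitian :=
    isHermitian_mul_mul_conjTranspose _ (isHermitian_diagonal s)
  refine ⟨_, hσ, forall_abs_sub_le_iff_exists_Icc.mpr ⟨0, fun i => ?_⟩, ?_⟩
  · obtain ⟨k, hk⟩ : hσ.eigenvalues i ∈ Set.range s := by
      rw [← spectrum_diagonal (R := ℝ),
        ← Unitary.spectrum_star_right_conjugate (U := hp.eigenvectorUnitary),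
        hσ.spectrum_real_eq_range_eigenvalues]
      exact Set.mem_range_self i
    rw [← hk, zero_add]
    by_cases h : 0 ≤ hp.eigenvalues k <;> simp [s, h, hw]
  · have hconj : star U * (U * diagonal s * star U) * U = diagonal s := by
      simp only [U, ← mul_assoc, Unitary.coe_star_mul_self, one_mul]
      rw [mul_assoc, Unitary.coe_star_mul_self, mul_one]
    rw [hp.trace_mul_eq_sum_eigenvalues_mul_diag, hconj, Finset.mul_sum]
    refine Finset.sum_congr rfl fun i _ => ?_
    rcases le_or_gt 0 (hp.eigenvalues i) with h | h
    · simp [s, h, mul_comm]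
    · simp [s, h.not_ge, posPart_eq_zero.mpr h.le]

theorem IsHermitian.isGreatest_trace_mul {w : ℝ} (hw : 0 ≤ w) {p : Matrix n n ℝ}
    (hp : p.IsHermitian) (hptr : p.trace = 0) :
    IsGreatest {x : ℝ | ∃ σ : Matrix n n ℝ, ∃ hσ : σ.IsHermitian,
        (∀ i j, |hσ.eigenvalues i - hσ.eigenvalues j| ≤ w) ∧ x = (σ * p).trace}
      (w * ∑ i, (hp.eigenvalues i)⁺) := by
  refine ⟨?_, ?_⟩
  · obtain ⟨σ, hσ, hw', htr⟩ := hp.exists_trace_mul_eq_mul_sum_posPart hw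
    exact ⟨σ, hσ, hw', htr.symm⟩
  · rintro _ ⟨σ, hσ, hw', rfl⟩
    exact hσ.trace_mul_le_mul_sum_posPart hw' hp hptr

end Matrix

/-- For `d = 3`, the support function of the Tresca elastic region
`K = {σ ∈ S³ : max_{i,j} |σ_i − σ_j| ≤ σ_0}` at a trace-free symmetric matrix `p`
equals `σ_0` times the spectral radius `max_i |p_i|` of `p`. -/
theorem tresca_dissipation (σ0 : ℝ) (hσ0 : 0 < σ0)
    (p : Matrix (Fin 3) (Fin 3) ℝ) (hp : p.IsHermitian) (hptr : p.trace = 0) :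
    sSup {x : ℝ | ∃ σ : Matrix (Fin 3) (Fin 3) ℝ, ∃ hσ : σ.IsHermitian,
        (∀ i j, |hσ.eigenvalues i - hσ.eigenvalues j| ≤ σ0) ∧ x = (σ * p).trace}
      = σ0 * (⨆ i, |hp.eigenvalues i|) := by
  rw [(hp.isGreatest_trace_mul hσ0.le hptr).csSup_eq,
    sum_posPart_eq_iSup_abs_of_fin_three (hp.sum_eigenvalues_eq_zero hptr)]
end

section
/- For any symmetric matrices σ, p ∈ S^d and the Tresca-type constraint set K defined via the eigenvalues of σ, the supremum sup_{σ ∈ K} σ : p equals the supremum over real numbers σ_1,…,σ_d with max_{i,j}|σ_i − σ_j| ≤ σ_0 of Σ_i p_i σ_i, where p_1,…,p_d are the eigenvalues of p. In particular, the support function of K can be computed by simultaneously diagonalizing and pairing eigenvalues. -/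
open Matrix

/-!
Diagonalize `p = U diag(p_i) Uᴴ`. Then `tr(σ p) = ∑ p_i s_i` with `s_i` the diagonal entries of
`Uᴴ σ U`. Each diagonal entry of a unitary conjugate of `σ` is a convex combination of the
eigenvalues of `σ` (with weights the squared moduli of a row of a unitary matrix), so the `s_i`
are no further apart than the eigenvalues of `σ`. Conversely, `σ = U diag(s_i) Uᴴ` has
eigenvalues exactly the `s_i` and `tr(σ p) = ∑ p_i s_i`. Hence the two sets of values coincide.
-/

namespace Matrix

open Unitary

variable {𝕜 n : Type*} [RCLike 𝕜] [Fintype n] [DecidableEq n]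

lemma re_diag_conj_diagonal_mem_convexHull (U : unitaryGroup n 𝕜) (s : n → ℝ) (j : n) :
    RCLike.re (conjStarAlgAut 𝕜 _ U (diagonal (RCLike.ofReal ∘ s)) j j) ∈
      convexHull ℝ (Set.range s) := by
  have hmul_star (z : 𝕜) (r : ℝ) : z * r * star z = ((‖z‖ ^ 2 * r : ℝ) : 𝕜) := by
    rw [mul_right_comm, RCLike.star_def, RCLike.mul_conj]; push_cast; ring
  have hrow : ∑ l, ‖(U : Matrix n n 𝕜) j l‖ ^ 2 = 1 := by
    have := congrArg RCLike.re (congrFun (congrFun (coe_mul_star_self U) j) j)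
    simpa [mul_apply, RCLike.mul_conj] using this
  have hdiag : RCLike.re (conjStarAlgAut 𝕜 _ U (diagonal (RCLike.ofReal ∘ s)) j j) =
      ∑ l, ‖(U : Matrix n n 𝕜) j l‖ ^ 2 • s l := by
    rw [conjStarAlgAut_apply, mul_apply]
    simp only [mul_diagonal, star_apply, Function.comp_apply, hmul_star, map_sum,
      RCLike.ofReal_re, smul_eq_mul]
  rw [hdiag]
  exact (convex_convexHull ℝ _).sum_mem (fun l _ => by positivity) hrow
    fun l _ => subset_convexHull ℝ _ (Set.mem_range_self l)

namespace IsHermitian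

variable {A : Matrix n n 𝕜} (hA : A.IsHermitian)

lemma re_diag_conj_mem_convexHull_eigenvalues (V : unitaryGroup n 𝕜) (j : n) :
    RCLike.re (conjStarAlgAut 𝕜 _ V A j j) ∈ convexHull ℝ (Set.range hA.eigenvalues) := by
  have := re_diag_conj_diagonal_mem_convexHull (V * hA.eigenvectorUnitary) hA.eigenvalues j
  rwa [conjStarAlgAut_mul_apply, ← hA.spectral_theorem] at this

lemma abs_re_diag_conj_sub_le {c : ℝ} (hc : ∀ i j, |hA.eigenvalues i - hA.eigenvalues j| ≤ c)
    (V : unitaryGroup n 𝕜) (i j : n) :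
    |RCLike.re (conjStarAlgAut 𝕜 _ V A i i) - RCLike.re (conjStarAlgAut 𝕜 _ V A j j)| ≤ c := by
  obtain ⟨-, ⟨k, rfl⟩, -, ⟨l, rfl⟩, hkl⟩ := convexHull_exists_dist_ge2
    (hA.re_diag_conj_mem_convexHull_eigenvalues V i)
    (hA.re_diag_conj_mem_convexHull_eigenvalues V j)
  exact hkl.trans (hc k l)

lemma range_eigenvalues_of_eq_conj_diagonal (U : unitaryGroup n 𝕜) (s : n → ℝ)
    (hAU : A = conjStarAlgAut 𝕜 _ U (diagonal (RCLike.ofReal ∘ s))) :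
    Set.range hA.eigenvalues = Set.range s := by
  ext x
  rw [← hA.spectrum_real_eq_range_eigenvalues, hAU, conjStarAlgAut_apply,
    spectrum_star_right_conjugate, ← spectrum.algebraMap_mem_iff 𝕜, spectrum_diagonal]
  simp

lemma trace_mul_eq_sum_eigenvalues_mul_diag_s4 (B : Matrix n n 𝕜) :
    (B * A).trace =
      ∑ i, hA.eigenvalues i * conjStarAlgAut 𝕜 _ (star hA.eigenvectorUnitary) B i i := by
  conv_lhs => rw [hA.spectral_theorem, conjStarAlgAut_apply]
  rw [← Matrix.mul_assoc, trace_mul_cycle, ← Matrix.mul_assoc, trace_mul_comm]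
  simp [trace, mul_comm]

end IsHermitian

end Matrix

theorem tresca_support_diagonalization_general {d : ℕ} (σ0 : ℝ)
    (p : Matrix (Fin d) (Fin d) ℝ) (hp : p.IsHermitian) :
    sSup {x : ℝ | ∃ σ : Matrix (Fin d) (Fin d) ℝ, ∃ hσ : σ.IsHermitian,
        (∀ i j, |hσ.eigenvalues i - hσ.eigenvalues j| ≤ σ0) ∧ x = (σ * p).trace}
      = sSup {x : ℝ | ∃ s : Fin d → ℝ,
        (∀ i j, |s i - s j| ≤ σ0) ∧ x = ∑ i, hp.eigenvalues i * s i} := by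
  set U := hp.eigenvectorUnitary
  congr 1
  ext x
  constructor
  · rintro ⟨σ, hσ, hspread, rfl⟩
    exact ⟨fun i => Unitary.conjStarAlgAut ℝ _ (star U) σ i i,
      hσ.abs_re_diag_conj_sub_le hspread (star U), hp.trace_mul_eq_sum_eigenvalues_mul_diag_s4 σ⟩
  · rintro ⟨s, hspread, rfl⟩
    set σ := Unitary.conjStarAlgAut ℝ _ U (diagonal (RCLike.ofReal ∘ s))
    have hσ : σ.IsHermitian := ((isHermitian_diagonal _).isSelfAdjoint.map _).isHermitian
    have hrange := hσ.range_eigenvalues_of_eq_conj_diagonal U s rfl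
    refine ⟨σ, hσ, fun i j => ?_, ?_⟩
    · obtain ⟨k, hk⟩ : hσ.eigenvalues i ∈ Set.range s := hrange ▸ ⟨i, rfl⟩
      obtain ⟨l, hl⟩ : hσ.eigenvalues j ∈ Set.range s := hrange ▸ ⟨j, rfl⟩
      exact hk ▸ hl ▸ hspread k l
    · rw [hp.trace_mul_eq_sum_eigenvalues_mul_diag_s4, ← Unitary.conjStarAlgAut_mul_apply,
        Unitary.star_mul_self, map_one]
      simp

/-- For the Tresca-type constraint set `K` defined via eigenvalues, the
support function `sup_{σ ∈ K} σ : p` equals the supremum over real tuples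
`σ_1,…,σ_d` with `max_{i,j}|σ_i − σ_j| ≤ σ_0` of `Σ_i p_i σ_i`, where `p_1,…,p_d` are
the eigenvalues of `p`; i.e. the support function is computed by simultaneous
diagonalization and pairing of eigenvalues. -/
theorem tresca_support_diagonalization {d : ℕ} (σ0 : ℝ) (hσ0 : 0 ≤ σ0)
    (p : Matrix (Fin d) (Fin d) ℝ) (hp : p.IsHermitian) :
    sSup {x : ℝ | ∃ σ : Matrix (Fin d) (Fin d) ℝ, ∃ hσ : σ.IsHermitian,
        (∀ i j, |hσ.eigenvalues i - hσ.eigenvalues j| ≤ σ0) ∧ x = (σ * p).trace}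
      = sSup {x : ℝ | ∃ s : Fin d → ℝ,
        (∀ i j, |s i - s j| ≤ σ0) ∧ x = ∑ i, hp.eigenvalues i * s i} :=
  tresca_support_diagonalization_general σ0 p hp
end

section
/- Let H be a symmetric positive semidefinite block matrix H = [[E, Ĉ],[Ĉ^T, P̂]] with E symmetric positive definite, and suppose ker H = {0} × ker P̂. Then the Schur complement S = E − Ĉ P̂⁺ Ĉ^T, where P̂⁺ is the Moore–Penrose pseudoinverse of P̂, is symmetric positive definite. -/
/-!
Since `ker P̂ ⊆ ker Ĉ`, the generalized inverse gives a factorization `Ĉ = W P̂` with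
`W = Ĉ P̂⁺`, and then `S = E - W P̂ Wᵀ`. For `p = -Wᵀ u` the vector `H (u, p)` is `(S u, 0)`,
so `uᵀ S u = (u, p)ᵀ H (u, p) ≥ 0`; if this vanishes then `H (u, p) = 0` because `H` is
positive semidefinite, and the kernel condition forces `u = 0`.
-/

open Matrix

namespace Matrix

variable {k l n o R : Type*} [Fintype n]

theorem mul_eq_zero_of_ker_le [Semiring R] [Fintype o] {P : Matrix k n R} {C : Matrix l n R}
    (hker : ∀ q, P *ᵥ q = 0 → C *ᵥ q = 0) {M : Matrix n o R} (hM : P * M = 0) :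
    C * M = 0 :=
  ext_iff_mulVec.2 fun v ↦ by
    rw [← mulVec_mulVec, zero_mulVec]
    exact hker _ (by rw [mulVec_mulVec, hM, zero_mulVec])

theorem mul_mul_eq_self_of_ker_le [Ring R] [DecidableEq n] {P X : Matrix n n R}
    {C : Matrix l n R} (hker : ∀ q, P *ᵥ q = 0 → C *ᵥ q = 0) (hX : P * X * P = P) :
    C * X * P = C := by
  have h : C * (1 - X * P) = 0 := mul_eq_zero_of_ker_le hker <| by
    rw [Matrix.mul_sub, Matrix.mul_one, ← Matrix.mul_assoc, hX, sub_self]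
  rw [Matrix.mul_sub, Matrix.mul_one, sub_eq_zero] at h
  rw [Matrix.mul_assoc, ← h]

theorem fromBlocks_mulVec_sumElim_neg_transpose_mulVec [Fintype l] [CommRing R]
    (E : Matrix l l R) (W : Matrix l n R) {P : Matrix n n R} (hP : Pᵀ = P) (x : l → R) :
    fromBlocks E (W * P) (W * P)ᵀ P *ᵥ Sum.elim x (-(Wᵀ *ᵥ x)) =
      Sum.elim ((E - W * P * Wᵀ) *ᵥ x) 0 := by
  rw [fromBlocks_mulVec, Sum.elim_comp_inl, Sum.elim_comp_inr, transpose_mul, hP]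
  congr 1
  · rw [mulVec_neg, mulVec_mulVec, sub_mulVec, sub_eq_add_neg]
  · rw [mulVec_neg, mulVec_mulVec, add_neg_cancel]

theorem PosSemidef.posDef_sub_mul_mul_transpose [Fintype l] {E : Matrix l l ℝ}
    {C : Matrix l n ℝ} {P : Matrix n n ℝ} (hH : (fromBlocks E C Cᵀ P).PosSemidef)
    {W : Matrix l n ℝ} (hC : W * P = C)
    (hker : ∀ x p, fromBlocks E C Cᵀ P *ᵥ Sum.elim x p = 0 → x = 0) :
    (E - W * P * Wᵀ).PosDef := by
  subst hC
  obtain ⟨hE, -, -, hP⟩ := isHermitian_fromBlocks_iff.1 hH.isHermitian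
  refine posDef_iff_dotProduct_mulVec.2 ⟨hE.sub ?_, fun x hx ↦ ?_⟩
  · simpa [conjTranspose_eq_transpose_of_trivial] using isHermitian_mul_mul_conjTranspose W hP
  set v := Sum.elim x (-(Wᵀ *ᵥ x))
  have hquad : star v ⬝ᵥ fromBlocks E (W * P) (W * P)ᵀ P *ᵥ v =
      star x ⬝ᵥ (E - W * P * Wᵀ) *ᵥ x := by
    rw [fromBlocks_mulVec_sumElim_neg_transpose_mulVec E W (isHermitian_iff_isSymm.1 hP).eq x,
      star_trivial, star_trivial, sumElim_dotProduct_sumElim, dotProduct_zero, add_zero]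
  refine (hquad ▸ hH.dotProduct_mulVec_nonneg v).lt_of_ne fun h ↦ hx ?_
  exact hker _ _ ((hH.dotProduct_mulVec_zero_iff v).1 (hquad ▸ h.symm))

end Matrix

theorem schur_complement_posDef_general {n m : ℕ}
    (E : Matrix (Fin n) (Fin n) ℝ) (C : Matrix (Fin n) (Fin m) ℝ)
    (P : Matrix (Fin m) (Fin m) ℝ)
    (hH : (Matrix.fromBlocks E C Cᵀ P).PosSemidef)
    (Pplus : Matrix (Fin m) (Fin m) ℝ)
    (hP1 : P * Pplus * P = P)
    (hker : ∀ (u : Fin n → ℝ) (p : Fin m → ℝ),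
        (Matrix.fromBlocks E C Cᵀ P) *ᵥ Sum.elim u p = 0 ↔ (u = 0 ∧ P *ᵥ p = 0)) :
    (E - C * Pplus * Cᵀ).PosDef := by
  have hP : Pᵀ = P := (isHermitian_iff_isSymm.1 (isHermitian_fromBlocks_iff.1 hH.1).2.2.2).eq
  have hC : C * Pplus * P = C := by
    refine mul_mul_eq_self_of_ker_le (fun q hq ↦ ?_) hP1
    simpa [fromBlocks_mulVec] using congrArg (· ∘ Sum.inl) ((hker 0 q).2 ⟨rfl, hq⟩)
  have hS : C * Pplus * Cᵀ = C * Pplus * P * (C * Pplus)ᵀ :=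
    calc C * Pplus * Cᵀ = C * Pplus * P * Pplus * (C * Pplus * P)ᵀ := by rw [hC]
      _ = C * Pplus * (P * Pplus * P) * (C * Pplus)ᵀ := by
        simp only [transpose_mul, hP, Matrix.mul_assoc]
      _ = C * Pplus * P * (C * Pplus)ᵀ := by rw [hP1]
  rw [hS]
  exact hH.posDef_sub_mul_mul_transpose hC fun u p h ↦ ((hker u p).1 h).1

/-- Let `H = [[E, Ĉ],[Ĉᵀ, P̂]]` be symmetric positive semidefinite with
`E` symmetric positive definite and `ker H = {0} × ker P̂`.  Then the Schur complement
`S = E − Ĉ P̂⁺ Ĉᵀ` (with `P̂⁺` the Moore–Penrose pseudoinverse of `P̂`, characterized by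
the four Penrose conditions) is symmetric positive definite. -/
theorem schur_complement_posDef {n m : ℕ}
    (E : Matrix (Fin n) (Fin n) ℝ) (C : Matrix (Fin n) (Fin m) ℝ)
    (P : Matrix (Fin m) (Fin m) ℝ)
    (hH : (Matrix.fromBlocks E C Cᵀ P).PosSemidef)
    (hE : E.PosDef)
    (Pplus : Matrix (Fin m) (Fin m) ℝ)
    (hP1 : P * Pplus * P = P) (hP2 : Pplus * P * Pplus = Pplus)
    (hP3 : (P * Pplus)ᵀ = P * Pplus) (hP4 : (Pplus * P)ᵀ = Pplus * P)
    (hker : ∀ (u : Fin n → ℝ) (p : Fin m → ℝ),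
        (Matrix.fromBlocks E C Cᵀ P) *ᵥ Sum.elim u p = 0 ↔ (u = 0 ∧ P *ᵥ p = 0)) :
    (E - C * Pplus * Cᵀ).PosDef :=
  schur_complement_posDef_general E C P hH Pplus hP1 hker
end

section
/- Under the hypotheses of the previous Schur complement setting (ker H = {0} × ker P̂, E positive definite, H positive semidefinite), a pair (u,p) solves the block linear system E u + Ĉ p = g_1, Ĉ^T u + P̂ p = g_2 (with g_2 in the range of P̂) whenever u solves the Schur complement equation (E − Ĉ P̂⁺ Ĉ^T) u = g_1 − Ĉ P̂⁺ g_2 and p solves P̂ p = g_2 − Ĉ^T u; moreover the Schur complement equation has a unique solution u, and p is unique up to elements of ker P̂. -/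
open Matrix

private lemma pinv_unique {m : ℕ} (M A B : Matrix (Fin m) (Fin m) ℝ)
    (hA1 : M * A * M = M) (hA2 : A * M * A = A)
    (hA3 : (M * A)ᵀ = M * A) (hA4 : (A * M)ᵀ = A * M)
    (hB1 : M * B * M = M) (hB2 : B * M * B = B)
    (hB3 : (M * B)ᵀ = M * B) (hB4 : (B * M)ᵀ = B * M) : A = B := by
  have h1 : M * A = M * B := by
    calc M * A = M * B * M * A := by rw [hB1]
      _ = (M * B) * (M * A) := by rw [mul_assoc (M * B)]
      _ = (M * B)ᵀ * (M * A)ᵀ := by rw [hB3, hA3]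
      _ = ((M * A) * (M * B))ᵀ := by simp only [transpose_mul, mul_assoc]
      _ = (M * A * M * B)ᵀ := by rw [mul_assoc (M * A)]
      _ = (M * B)ᵀ := by rw [hA1]
      _ = M * B := hB3
  have h2 : A * M = B * M := by
    calc A * M = A * (M * B * M) := by rw [hB1]
      _ = (A * M) * (B * M) := by simp only [mul_assoc]
      _ = (A * M)ᵀ * (B * M)ᵀ := by rw [hA4, hB4]
      _ = ((B * M) * (A * M))ᵀ := by simp only [transpose_mul, mul_assoc]
      _ = (B * (M * A * M))ᵀ := by simp only [mul_assoc]
      _ = (B * M)ᵀ := by rw [hA1]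
      _ = B * M := hB4
  calc A = A * M * A := hA2.symm
    _ = B * M * A := by rw [h2]
    _ = B * (M * A) := by rw [mul_assoc]
    _ = B * (M * B) := by rw [h1]
    _ = B * M * B := by rw [mul_assoc]
    _ = B := hB2

/-- With `H = [[E, Ĉ],[Ĉᵀ, P̂]]` symmetric positive semidefinite,
`E` positive definite, `ker H = {0} × ker P̂`, and `g₂` in `range P̂ + range Ĉᵀ`:
if `u` solves the Schur complement equation `(E − Ĉ P̂⁺ Ĉᵀ) u = g₁ − Ĉ P̂⁺ g₂` and `p`
solves `P̂ p = g₂ − Ĉᵀ u`, then `(u,p)` solves the block system `E u + Ĉ p = g₁`,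
`Ĉᵀ u + P̂ p = g₂`; moreover the Schur complement equation has a unique solution `u`,
and `p` is unique up to elements of `ker P̂`. -/
theorem schur_complement_solves {n m : ℕ}
    (E : Matrix (Fin n) (Fin n) ℝ) (C : Matrix (Fin n) (Fin m) ℝ)
    (P : Matrix (Fin m) (Fin m) ℝ)
    (hH : (Matrix.fromBlocks E C Cᵀ P).PosSemidef)
    (hE : E.PosDef)
    (Pplus : Matrix (Fin m) (Fin m) ℝ)
    (hP1 : P * Pplus * P = P) (hP2 : Pplus * P * Pplus = Pplus)
    (hP3 : (P * Pplus)ᵀ = P * Pplus) (hP4 : (Pplus * P)ᵀ = Pplus * P)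
    (hker : ∀ (u : Fin n → ℝ) (p : Fin m → ℝ),
        (Matrix.fromBlocks E C Cᵀ P) *ᵥ Sum.elim u p = 0 ↔ (u = 0 ∧ P *ᵥ p = 0))
    (g1 : Fin n → ℝ) (g2 : Fin m → ℝ)
    (hg2 : ∃ (q : Fin m → ℝ) (w : Fin n → ℝ), g2 = P *ᵥ q + Cᵀ *ᵥ w) :
    (∀ (u : Fin n → ℝ) (p : Fin m → ℝ),
        (E - C * Pplus * Cᵀ) *ᵥ u = g1 - C *ᵥ (Pplus *ᵥ g2) →
        P *ᵥ p = g2 - Cᵀ *ᵥ u →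
        (E *ᵥ u + C *ᵥ p = g1 ∧ Cᵀ *ᵥ u + P *ᵥ p = g2)) ∧
    (∃! u : Fin n → ℝ, (E - C * Pplus * Cᵀ) *ᵥ u = g1 - C *ᵥ (Pplus *ᵥ g2)) ∧
    (∀ (u : Fin n → ℝ) (p p' : Fin m → ℝ),
        P *ᵥ p = g2 - Cᵀ *ᵥ u → P *ᵥ p' = g2 - Cᵀ *ᵥ u → P *ᵥ (p - p') = 0) := by
  -- P is symmetric
  have hPsym : Pᵀ = P := by
    ext i j
    have := congrFun (congrFun hH.1 (Sum.inr i)) (Sum.inr j)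
    simpa using this
  -- Pplus is symmetric
  have hPPsym : Pplusᵀ = Pplus := by
    refine pinv_unique P Pplusᵀ Pplus ?_ ?_ ?_ ?_ hP1 hP2 hP3 hP4
    · have := congrArg Matrix.transpose hP1
      rw [transpose_mul, transpose_mul, hPsym, ← mul_assoc] at this
      exact this
    · have := congrArg Matrix.transpose hP2
      rw [transpose_mul, transpose_mul, hPsym, ← mul_assoc] at this
      exact this
    · rw [transpose_mul, transpose_transpose, hPsym, ← hP4, transpose_mul, hPsym]
    · rw [transpose_mul, hPsym, transpose_transpose, ← hP3, transpose_mul, hPsym]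
  -- kernel of P is inside kernel of C
  have hkerC : ∀ p : Fin m → ℝ, P *ᵥ p = 0 → C *ᵥ p = 0 := by
    intro p hp
    have h0 := (hker 0 p).mpr ⟨rfl, hp⟩
    rw [fromBlocks_mulVec] at h0
    funext i
    have := congrFun h0 (Sum.inl i)
    simpa using this
  have hCPP : ∀ p : Fin m → ℝ, C *ᵥ (Pplus *ᵥ (P *ᵥ p)) = C *ᵥ p := by
    intro p
    have hz : P *ᵥ (Pplus *ᵥ (P *ᵥ p) - p) = 0 := by
      rw [mulVec_sub, mulVec_mulVec, mulVec_mulVec, hP1, sub_self]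
    have hc := hkerC _ hz
    rw [mulVec_sub] at hc
    exact sub_eq_zero.mp hc
  -- the Schur complement has trivial kernel
  have hS0 : ∀ u : Fin n → ℝ, (E - C * Pplus * Cᵀ) *ᵥ u = 0 → u = 0 := by
    intro u hu
    obtain ⟨w, hw⟩ : ∃ w, w = Cᵀ *ᵥ u := ⟨_, rfl⟩
    obtain ⟨p, hp⟩ : ∃ p, p = -(Pplus *ᵥ w) := ⟨_, rfl⟩
    have hHv : (Matrix.fromBlocks E C Cᵀ P) *ᵥ Sum.elim u p =
        Sum.elim ((E - C * Pplus * Cᵀ) *ᵥ u) (w - (P * Pplus) *ᵥ w) := by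
      have hA : E *ᵥ u + C *ᵥ p = (E - C * Pplus * Cᵀ) *ᵥ u := by
        rw [hp, hw, mulVec_neg, mulVec_mulVec, mulVec_mulVec, sub_mulVec]
        abel
      have hB : Cᵀ *ᵥ u + P *ᵥ p = w - (P * Pplus) *ᵥ w := by
        rw [hp, mulVec_neg, mulVec_mulVec, ← hw]
        abel
      rw [fromBlocks_mulVec, Sum.elim_comp_inl, Sum.elim_comp_inr, hA, hB]
    have hq : Sum.elim u p ⬝ᵥ ((Matrix.fromBlocks E C Cᵀ P) *ᵥ Sum.elim u p) = 0 := by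
      rw [hHv, sumElim_dotProduct_sumElim, hu, dotProduct_zero, zero_add, hp,
        neg_dotProduct]
      have hmv : Pplus *ᵥ w = w ᵥ* Pplus := by
        conv_lhs => rw [← hPPsym, mulVec_transpose]
      have h2 : Pplus *ᵥ (w - (P * Pplus) *ᵥ w) = 0 := by
        rw [mulVec_sub, mulVec_mulVec, ← mul_assoc, hP2, sub_self]
      have h1 : (Pplus *ᵥ w) ⬝ᵥ (w - (P * Pplus) *ᵥ w) = w ⬝ᵥ (Pplus *ᵥ (w - (P * Pplus) *ᵥ w)) := by
        rw [hmv, ← dotProduct_mulVec]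
      rw [h1, h2, dotProduct_zero, neg_zero]
    have hv0 : (Matrix.fromBlocks E C Cᵀ P) *ᵥ Sum.elim u p = 0 := by
      refine (hH.dotProduct_mulVec_zero_iff (Sum.elim u p)).mp ?_
      simpa using hq
    exact ((hker u p).mp hv0).1
  refine ⟨?_, ?_, ?_⟩
  · -- part 1
    intro u p hu hp
    have h2 : Cᵀ *ᵥ u + P *ᵥ p = g2 := by rw [hp]; abel
    refine ⟨?_, h2⟩
    have e1 : C *ᵥ p = C *ᵥ (Pplus *ᵥ g2) - C *ᵥ (Pplus *ᵥ (Cᵀ *ᵥ u)) := by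
      rw [← hCPP p, hp, mulVec_sub, mulVec_sub]
    rw [sub_mulVec] at hu
    have e2 : (C * Pplus * Cᵀ) *ᵥ u = C *ᵥ (Pplus *ᵥ (Cᵀ *ᵥ u)) := by
      rw [mulVec_mulVec, mulVec_mulVec]
    rw [e2] at hu
    rw [e1]
    funext i
    have := congrFun hu i
    simp only [Pi.add_apply, Pi.sub_apply] at this ⊢
    linarith
  · -- part 2: unique solvability of the Schur equation
    have hinj : Function.Injective ((E - C * Pplus * Cᵀ).mulVecLin) := by
      intro x y hxy
      have : (E - C * Pplus * Cᵀ) *ᵥ (x - y) = 0 := by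
        rw [mulVec_sub]
        simp only [Matrix.mulVecLin_apply] at hxy
        rw [hxy, sub_self]
      exact sub_eq_zero.mp (hS0 _ this)
    have hsurj : Function.Surjective ((E - C * Pplus * Cᵀ).mulVecLin) :=
      LinearMap.injective_iff_surjective.mp hinj
    obtain ⟨u0, hu0⟩ := hsurj (g1 - C *ᵥ (Pplus *ᵥ g2))
    have hu0' : (E - C * Pplus * Cᵀ) *ᵥ u0 = g1 - C *ᵥ (Pplus *ᵥ g2) := hu0
    refine ⟨u0, hu0', ?_⟩
    intro y hy
    have : (E - C * Pplus * Cᵀ) *ᵥ (y - u0) = 0 := by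
      rw [mulVec_sub, hy, hu0', sub_self]
    exact sub_eq_zero.mp (hS0 _ this)
  · -- part 3
    intro u p p' h h'
    rw [mulVec_sub, h, h', sub_self]
end

section
/- Let C be a symmetric positive definite fourth-order-like linear operator on S^d of the form C P = λ tr(P) I + 2μ P with μ > 0, let k_1 > 0, σ_c > 0, and R ∈ S^d with deviatoric part R^D. Then P* = (max{‖R^D‖ − σ_c, 0}/(2μ + k_1)) · R^D/‖R^D‖ (interpreted as 0 when R^D = 0) is the unique minimizer over trace-free symmetric d×d matrices P of the functional L(P) = ½ (C P + k_1 P) : P − P : R + σ_c ‖P‖. -/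
open Matrix

/-!
On trace-free matrices the `λ tr P` term of `C P` vanishes and `P : R = P : R^D`, so after the
isometry `P ↦ vec P` onto Euclidean space, `L(P) = a/2 ‖x‖² − ⟪x, r⟫ + σ ‖x‖` with `x = vec P`,
`a = 2μ + k₁`, `r = vec R^D`, `σ = σ_c`. This function of `x` is `a`-strongly convex and its
minimizer is the soft threshold `x* = (max (‖r‖ − σ) 0 / a) r / ‖r‖`, in the quantitative form
`f x* + a/2 ‖x − x*‖² ≤ f x`, which gives minimality and uniqueness at once.
-/

section SoftThreshold

variable {E : Type*} [NormedAddCommGroup E] [InnerProductSpace ℝ E]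

noncomputable def proxObjective (a σ : ℝ) (r x : E) : ℝ :=
  a / 2 * ‖x‖ ^ 2 - inner ℝ x r + σ * ‖x‖

/-- For `r = 0` the division by `‖r‖ = 0` yields `0`, which is the correct minimizer. -/
noncomputable def softThreshold (a σ : ℝ) (r : E) : E :=
  (max (‖r‖ - σ) 0 / a / ‖r‖) • r

theorem proxObjective_softThreshold_add_le {a σ : ℝ} (ha : 0 < a) (hσ : 0 ≤ σ) (r x : E) :
    proxObjective a σ r (softThreshold a σ r) + a / 2 * ‖x - softThreshold a σ r‖ ^ 2
      ≤ proxObjective a σ r x := by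
  have hcs : inner ℝ x r ≤ ‖x‖ * ‖r‖ := real_inner_le_norm x r
  rcases le_or_gt ‖r‖ σ with hr | hr
  · have hzero : softThreshold a σ r = 0 := by
      simp [softThreshold, max_eq_right (sub_nonpos.2 hr)]
    rw [hzero, sub_zero]
    simp only [proxObjective, norm_zero, inner_zero_left]
    linarith [mul_le_mul_of_nonneg_left hr (norm_nonneg x)]
  · set s := ‖r‖
    set c := (s - σ) / a / s
    have hs : 0 < s := hσ.trans_lt hr
    have hstar : softThreshold a σ r = c • r := by
      simp only [softThreshold, max_eq_left (sub_nonneg.2 hr.le), c, s]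
    rw [hstar]
    simp only [proxObjective, norm_sub_sq_real, norm_smul, inner_smul_left, inner_smul_right,
      real_inner_self_eq_norm_sq, Real.norm_eq_abs, abs_of_nonneg (show 0 ≤ c by positivity),
      conj_trivial]
    have hac : a * c = 1 - σ / s := by simp only [c]; field_simp
    -- after cancellation the gap is `σ (‖x‖ - ⟪x, r⟫ / ‖r‖)`, nonnegative by Cauchy–Schwarz
    have hgap : inner ℝ x r - a * c * inner ℝ x r = σ * (inner ℝ x r / s) := by
      rw [hac]; ring
    have hsq : a * (c * s) ^ 2 = c * s * (s - σ) := by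
      rw [show a * (c * s) ^ 2 = a * c * (c * s ^ 2) by ring, hac]; field_simp
    have hI : inner ℝ x r / s ≤ ‖x‖ := (div_le_iff₀ hs).2 hcs
    linarith [mul_le_mul_of_nonneg_left hI hσ]

end SoftThreshold

section Frobenius

variable {m n : Type*}

def frobeniusVec (A : Matrix m n ℝ) : EuclideanSpace ℝ (n × m) := WithLp.toLp 2 A.vec

theorem frobeniusVec_injective : Function.Injective (frobeniusVec : Matrix m n ℝ → _) :=
  fun _ _ h => vec_inj.1 (WithLp.toLp_injective 2 h)

theorem frobeniusVec_smul (c : ℝ) (A : Matrix m n ℝ) :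
    frobeniusVec (c • A) = c • frobeniusVec A := rfl

theorem inner_frobeniusVec [Fintype m] [Fintype n] (A B : Matrix m n ℝ) :
    inner ℝ (frobeniusVec A) (frobeniusVec B) = (Aᵀ * B).trace := by
  rw [frobeniusVec, frobeniusVec, EuclideanSpace.inner_toLp_toLp, star_trivial, dotProduct_comm,
    vec_dotProduct_vec]

theorem norm_frobeniusVec {d : ℕ} (A : Matrix (Fin d) (Fin d) ℝ) :
    ‖frobeniusVec A‖ = frobNorm A := by
  rw [norm_eq_sqrt_real_inner, inner_frobeniusVec, frobNorm]

end Frobenius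

section Deviator

variable {d : ℕ}

theorem trace_deviator (A : Matrix (Fin d) (Fin d) ℝ) : (deviator A).trace = 0 := by
  rcases Nat.eq_zero_or_pos d with rfl | hd
  · exact trace_fin_zero _
  · rw [deviator, trace_sub, trace_smul, trace_one, Fintype.card_fin, smul_eq_mul,
      div_mul_cancel₀ _ (by positivity), sub_self]

theorem Matrix.IsSymm.deviator {A : Matrix (Fin d) (Fin d) ℝ} (hA : A.IsSymm) :
    (deviator A).IsSymm := by
  rw [IsSymm, _root_.deviator, transpose_sub, transpose_smul, transpose_one, hA.eq]

theorem trace_transpose_mul_deviator {P : Matrix (Fin d) (Fin d) ℝ} (hP : P.trace = 0)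
    (A : Matrix (Fin d) (Fin d) ℝ) : (Pᵀ * deviator A).trace = (Pᵀ * A).trace := by
  rw [deviator, Matrix.mul_sub, trace_sub, Matrix.mul_smul, trace_smul, Matrix.mul_one,
    trace_transpose, hP, smul_zero, sub_zero]

end Deviator

theorem vonMises_local_minimizer_general {d : ℕ}
    (lam μ k1 σc : ℝ) (hμ : 0 < μ) (hk1 : 0 < k1) (hσc : 0 < σc)
    (R : Matrix (Fin d) (Fin d) ℝ) (hR : R.IsSymm) :
    let Cop : Matrix (Fin d) (Fin d) ℝ → Matrix (Fin d) (Fin d) ℝ :=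
      fun P => (lam * P.trace) • (1 : Matrix (Fin d) (Fin d) ℝ) + (2 * μ) • P
    let L : Matrix (Fin d) (Fin d) ℝ → ℝ :=
      fun P => (1 / 2) * ((Cop P + k1 • P)ᵀ * P).trace - (Pᵀ * R).trace
        + σc * frobNorm P
    let Pstar : Matrix (Fin d) (Fin d) ℝ :=
      (max (frobNorm (deviator R) - σc) 0 / (2 * μ + k1) / frobNorm (deviator R)) •
        deviator R
    Pstar.IsSymm ∧ Pstar.trace = 0 ∧
    (∀ P : Matrix (Fin d) (Fin d) ℝ, P.IsSymm → P.trace = 0 →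
        L Pstar ≤ L P ∧ (P ≠ Pstar → L Pstar < L P)) := by
  intro Cop L Pstar
  have ha : 0 < 2 * μ + k1 := by positivity
  set r := frobeniusVec (deviator R)
  have hL (P : Matrix (Fin d) (Fin d) ℝ) (hP : P.trace = 0) :
      L P = proxObjective (2 * μ + k1) σc r (frobeniusVec P) := by
    have hCop : Cop P + k1 • P = (2 * μ + k1) • P := by
      simp only [Cop, hP, mul_zero, zero_smul, zero_add, add_smul]
    simp only [L]
    rw [hCop, transpose_smul, smul_mul, trace_smul, smul_eq_mul,
      ← trace_transpose_mul_deviator hP R, ← inner_frobeniusVec, ← inner_frobeniusVec,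
      real_inner_self_eq_norm_sq, ← norm_frobeniusVec, proxObjective]
    ring
  have hPstar : frobeniusVec Pstar = softThreshold (2 * μ + k1) σc r := by
    rw [frobeniusVec_smul, softThreshold, norm_frobeniusVec]
  have hPstar_trace : Pstar.trace = 0 := by rw [trace_smul, trace_deviator, smul_zero]
  refine ⟨hR.deviator.smul _, hPstar_trace, fun P _ hP => ?_⟩
  have hgrowth := proxObjective_softThreshold_add_le ha hσc.le r (frobeniusVec P)
  rw [← hPstar, ← hL P hP, ← hL Pstar hPstar_trace] at hgrowth
  have hgap := mul_nonneg (half_pos ha).le (sq_nonneg ‖frobeniusVec P - frobeniusVec Pstar‖)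
  refine ⟨by linarith, fun hne => ?_⟩
  have hdist : 0 < ‖frobeniusVec P - frobeniusVec Pstar‖ :=
    norm_pos_iff.2 (sub_ne_zero.2 (frobeniusVec_injective.ne hne))
  linarith [mul_pos (half_pos ha) (pow_pos hdist 2)]

/-- For the St. Venant–Kirchhoff operator `C P = λ tr(P) I + 2μ P` with
`μ > 0`, `k₁ > 0`, `σ_c > 0`, and `R ∈ S^d` with deviator `R^D`, the matrix
`P* = (max{‖R^D‖ − σ_c, 0}/(2μ + k₁)) R^D/‖R^D‖` (zero if `R^D = 0`) is the unique
minimizer over trace-free symmetric matrices of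
`L(P) = ½ (C P + k₁ P) : P − P : R + σ_c ‖P‖`. -/
theorem vonMises_local_minimizer {d : ℕ} (hd : 0 < d)
    (lam μ k1 σc : ℝ) (hlam : 0 < lam) (hμ : 0 < μ) (hk1 : 0 < k1) (hσc : 0 < σc)
    (R : Matrix (Fin d) (Fin d) ℝ) (hR : R.IsSymm) :
    let Cop : Matrix (Fin d) (Fin d) ℝ → Matrix (Fin d) (Fin d) ℝ :=
      fun P => (lam * P.trace) • (1 : Matrix (Fin d) (Fin d) ℝ) + (2 * μ) • P
    let L : Matrix (Fin d) (Fin d) ℝ → ℝ :=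
      fun P => (1 / 2) * ((Cop P + k1 • P)ᵀ * P).trace - (Pᵀ * R).trace
        + σc * frobNorm P
    let Pstar : Matrix (Fin d) (Fin d) ℝ :=
      (max (frobNorm (deviator R) - σc) 0 / (2 * μ + k1) / frobNorm (deviator R)) •
        deviator R
    Pstar.IsSymm ∧ Pstar.trace = 0 ∧
    (∀ P : Matrix (Fin d) (Fin d) ℝ, P.IsSymm → P.trace = 0 →
        L Pstar ≤ L P ∧ (P ≠ Pstar → L Pstar < L P)) :=
  vonMises_local_minimizer_general lam μ k1 σc hμ hk1 hσc R hR
end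

section
/- Let f : ℝ^d → ℝ ∪ {+∞} be convex and symmetric (invariant under coordinate permutations), and let λ : S^d → ℝ^d map a symmetric matrix to its eigenvalues in nonincreasing order. Then the spectral function f ∘ λ : S^d → ℝ ∪ {+∞} is convex. -/
/-!
Diagonalize `Z = t • X + (1 - t) • Y` by an orthogonal `U`. Then `λ(Z)` is the diagonal of
`Uᵀ Z U`, i.e. `t • diag (Uᵀ X U) + (1 - t) • diag (Uᵀ Y U)`, and convexity of `f` reduces the
claim to `f (diag (Uᵀ X U)) ≤ f (λ X)`. Writing `X = V diag(λ X) Vᵀ`, the diagonal of `Uᵀ X U`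
is `S λ(X)` with `S = ((Uᵀ V)ᵢⱼ²)` doubly stochastic (Schur). By Birkhoff, `S λ(X)` is a convex
combination of permutations of `λ(X)`, and these all lie in the convex sublevel set
`{f ≤ f (λ X)}` because `f` is symmetric.
-/

open Matrix

lemma EReal.coe_mul_add_coe_mul_le {a b : ℝ} (ha : 0 ≤ a) (hb : 0 ≤ b) (hab : a + b = 1)
    {p q M : EReal} (hp : p ≤ M) (hq : q ≤ M) : (a : EReal) * p + (b : EReal) * q ≤ M := by
  induction M with
  | bot =>
    rw [le_bot_iff] at hp hq
    subst hp hq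
    rcases ha.eq_or_lt with rfl | ha
    · simp [show b = 1 by linarith]
    · rw [EReal.coe_mul_bot_of_pos ha, EReal.bot_add]
  | coe m =>
    calc (a : EReal) * p + b * q ≤ a * m + b * m := by gcongr
      _ = m := by norm_cast; rw [← add_mul, hab, one_mul]
  | top => exact le_top

lemma convex_setOf_le_of_ereal_convex {E : Type*} [AddCommGroup E] [Module ℝ E] {f : E → EReal}
    (hconv : ∀ (a b : E) (t : ℝ), 0 ≤ t → t ≤ 1 →
      f (t • a + (1 - t) • b) ≤ (t : EReal) * f a + ((1 - t : ℝ) : EReal) * f b)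
    (M : EReal) : Convex ℝ {x | f x ≤ M} := by
  intro x hx y hy a b ha hb hab
  obtain rfl : b = 1 - a := by linarith
  exact (hconv x y a ha (by linarith)).trans (EReal.coe_mul_add_coe_mul_le ha hb hab hx hy)

lemma le_of_mem_convexHull_range_comp_perm {ι : Type*} {f : (ι → ℝ) → EReal}
    (hconv : ∀ (a b : ι → ℝ) (t : ℝ), 0 ≤ t → t ≤ 1 →
      f (t • a + (1 - t) • b) ≤ (t : EReal) * f a + ((1 - t : ℝ) : EReal) * f b)
    (hsymm : ∀ (σ : Equiv.Perm ι) (v : ι → ℝ), f (v ∘ σ) = f v) {x v : ι → ℝ}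
    (hx : x ∈ convexHull ℝ (Set.range fun σ : Equiv.Perm ι ↦ v ∘ σ)) : f x ≤ f v :=
  convexHull_min (Set.range_subset_iff.2 fun σ ↦ (hsymm σ v).le)
    (convex_setOf_le_of_ereal_convex hconv _) hx

namespace Matrix

variable {n : Type*} [Fintype n] [DecidableEq n]

lemma mulVec_mem_convexHull_range_comp_perm {S : Matrix n n ℝ} (hS : S ∈ doublyStochastic ℝ n)
    (v : n → ℝ) : S *ᵥ v ∈ convexHull ℝ (Set.range fun σ : Equiv.Perm n ↦ v ∘ σ) := by
  rw [← SetLike.mem_coe, doublyStochastic_eq_convexHull_permMatrix] at hS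
  have := Set.mem_image_of_mem ((mulVecBilin ℝ ℝ).flip v) hS
  rw [LinearMap.image_convexHull] at this
  change _ ∈ convexHull ℝ (_ '' Set.range _) at this
  rw [← Set.range_comp] at this
  simpa [Function.comp_def, permMatrix_mulVec] using this

lemma of_sq_mem_doublyStochastic {U : Matrix n n ℝ} (hU : U ∈ unitaryGroup n ℝ) :
    of (fun i j ↦ U i j ^ 2) ∈ doublyStochastic ℝ n := by
  rw [mem_doublyStochastic_iff_sum]
  refine ⟨fun i j ↦ sq_nonneg _, fun i ↦ ?_, fun j ↦ ?_⟩
  · simpa [mul_apply, sq] using congr_fun₂ (mem_unitaryGroup_iff.mp hU) i i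
  · simpa [mul_apply, sq] using congr_fun₂ (mem_unitaryGroup_iff'.mp hU) j j

lemma diag_mul_diagonal_mul_star (U : Matrix n n ℝ) (v : n → ℝ) :
    (U * diagonal v * star U).diag = of (fun i j ↦ U i j ^ 2) *ᵥ v := by
  ext i
  rw [diag_apply, mul_apply]
  simp [mul_diagonal, mulVec, dotProduct, sq, mul_comm, mul_left_comm]

lemma IsHermitian.diag_conj_mem_convexHull_range_comp_perm {A : Matrix n n ℝ}
    (hA : A.IsHermitian) {U : Matrix n n ℝ} (hU : U ∈ unitaryGroup n ℝ) :
    (star U * A * U).diag ∈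
      convexHull ℝ (Set.range fun σ : Equiv.Perm n ↦ hA.eigenvalues ∘ σ) := by
  set W : Matrix n n ℝ := star U * hA.eigenvectorUnitary
  have hW : W ∈ unitaryGroup n ℝ := mul_mem (Unitary.star_mem hU) hA.eigenvectorUnitary.2
  have hconj : star U * A * U = W * diagonal hA.eigenvalues * star W := by
    conv_lhs => rw [hA.spectral_theorem]
    simp [W, Unitary.conjStarAlgAut_apply, mul_assoc, star_mul]
  rw [hconj, diag_mul_diagonal_mul_star]
  exact mulVec_mem_convexHull_range_comp_perm (of_sq_mem_doublyStochastic hW) _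

lemma IsHermitian.diag_conj_eigenvectorUnitary {A : Matrix n n ℝ} (hA : A.IsHermitian) :
    (star (hA.eigenvectorUnitary : Matrix n n ℝ) * A * hA.eigenvectorUnitary).diag =
      hA.eigenvalues := by
  have := congr_arg diag hA.conjStarAlgAut_star_eigenvectorUnitary
  simpa [Unitary.conjStarAlgAut_apply] using this

lemma IsHermitian.le_of_diag_conj {f : (n → ℝ) → EReal}
    (hconv : ∀ (a b : n → ℝ) (t : ℝ), 0 ≤ t → t ≤ 1 →
      f (t • a + (1 - t) • b) ≤ (t : EReal) * f a + ((1 - t : ℝ) : EReal) * f b)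
    (hsymm : ∀ (σ : Equiv.Perm n) (v : n → ℝ), f (v ∘ σ) = f v) {A : Matrix n n ℝ}
    (hA : A.IsHermitian) {U : Matrix n n ℝ} (hU : U ∈ unitaryGroup n ℝ) :
    f (star U * A * U).diag ≤ f hA.eigenvalues :=
  le_of_mem_convexHull_range_comp_perm hconv hsymm (hA.diag_conj_mem_convexHull_range_comp_perm hU)

end Matrix

theorem spectral_function_convex_general {d : ℕ}
    (f : (Fin d → ℝ) → EReal)
    (hconv : ∀ (a b : Fin d → ℝ) (t : ℝ), 0 ≤ t → t ≤ 1 →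
        f (t • a + (1 - t) • b) ≤ (t : EReal) * f a + ((1 - t : ℝ) : EReal) * f b)
    (hsymm : ∀ (σ : Equiv.Perm (Fin d)) (v : Fin d → ℝ), f (v ∘ σ) = f v)
    (X Y : Matrix (Fin d) (Fin d) ℝ) (hX : X.IsHermitian) (hY : Y.IsHermitian)
    (t : ℝ) (ht0 : 0 ≤ t) (ht1 : t ≤ 1)
    (hZ : (t • X + (1 - t) • Y).IsHermitian)
    -- sorted (nonincreasing) eigenvalue vectors of X, Y and the convex combination
    (lX lY lZ : Fin d → ℝ)
    (hlX' : ∃ σ : Equiv.Perm (Fin d), lX = hX.eigenvalues ∘ σ)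
    (hlY' : ∃ σ : Equiv.Perm (Fin d), lY = hY.eigenvalues ∘ σ)
    (hlZ' : ∃ σ : Equiv.Perm (Fin d), lZ = hZ.eigenvalues ∘ σ) :
    f lZ ≤ (t : EReal) * f lX + ((1 - t : ℝ) : EReal) * f lY := by
  obtain ⟨σX, rfl⟩ := hlX'
  obtain ⟨σY, rfl⟩ := hlY'
  obtain ⟨σZ, rfl⟩ := hlZ'
  rw [hsymm, hsymm, hsymm]
  set U := (hZ.eigenvectorUnitary : Matrix (Fin d) (Fin d) ℝ)
  have hU : U ∈ unitaryGroup (Fin d) ℝ := hZ.eigenvectorUnitary.2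
  have hsplit : hZ.eigenvalues = t • (star U * X * U).diag + (1 - t) • (star U * Y * U).diag := by
    rw [← hZ.diag_conj_eigenvectorUnitary, Matrix.mul_add, Matrix.add_mul, diag_add,
      Matrix.mul_smul, Matrix.smul_mul, Matrix.mul_smul, Matrix.smul_mul, diag_smul, diag_smul]
  calc f hZ.eigenvalues
      ≤ t * f (star U * X * U).diag + ((1 - t : ℝ) : EReal) * f (star U * Y * U).diag :=
        hsplit ▸ hconv _ _ t ht0 ht1
    _ ≤ t * f hX.eigenvalues + ((1 - t : ℝ) : EReal) * f hY.eigenvalues := by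
        gcongr
        · exact hX.le_of_diag_conj hconv hsymm hU
        · exact hY.le_of_diag_conj hconv hsymm hU

/-- If `f : ℝ^d → ℝ ∪ {+∞}` is convex and symmetric (invariant under
coordinate permutations), then the spectral function `f ∘ λ`, where `λ` maps a
symmetric matrix to its eigenvalues sorted in nonincreasing order, is convex on the
symmetric matrices. -/
theorem spectral_function_convex {d : ℕ}
    (f : (Fin d → ℝ) → EReal)
    (hconv : ∀ (a b : Fin d → ℝ) (t : ℝ), 0 ≤ t → t ≤ 1 →
        f (t • a + (1 - t) • b) ≤ (t : EReal) * f a + ((1 - t : ℝ) : EReal) * f b)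
    (hsymm : ∀ (σ : Equiv.Perm (Fin d)) (v : Fin d → ℝ), f (v ∘ σ) = f v)
    (X Y : Matrix (Fin d) (Fin d) ℝ) (hX : X.IsHermitian) (hY : Y.IsHermitian)
    (t : ℝ) (ht0 : 0 ≤ t) (ht1 : t ≤ 1)
    (hZ : (t • X + (1 - t) • Y).IsHermitian)
    -- sorted (nonincreasing) eigenvalue vectors of X, Y and the convex combination
    (lX lY lZ : Fin d → ℝ)
    (hlX : Antitone lX) (hlY : Antitone lY) (hlZ : Antitone lZ)
    (hlX' : ∃ σ : Equiv.Perm (Fin d), lX = hX.eigenvalues ∘ σ)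
    (hlY' : ∃ σ : Equiv.Perm (Fin d), lY = hY.eigenvalues ∘ σ)
    (hlZ' : ∃ σ : Equiv.Perm (Fin d), lZ = hZ.eigenvalues ∘ σ) :
    f lZ ≤ (t : EReal) * f lX + ((1 - t : ℝ) : EReal) * f lY :=
  spectral_function_convex_general f hconv hsymm X Y hX hY t ht0 ht1 hZ lX lY lZ hlX' hlY' hlZ'
end
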